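/- For every t ∈ (0,1) with t ≠ 1/3, the set Λ(t) = {λ ∈ (0,1/3] : t ∈ C_λ − C_λ} has empty interior: between any two points λ₁ < λ₂ of Λ(t) there is a point of (λ₁, λ₂) not in Λ(t). -/

import Mathlib

/-!
Suppose `t` had a coding at every `λ` of an interval `[c, d] ⊂ (0, 1/3)`. Codings that first
differ at place `k` give values at least `λ^k (1 - 3λ)` apart, while every map `λ ↦ Π(i, λ)` is
Lipschitz on `[0, d]` with a constant independent of `i`; so codings of `t` at nearby parameters
share a long prefix. Each digit is therefore a continuous `{-1, 0, 1}`-valued function of `λ`, hence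
constant, and a single coding `j` satisfies `∑ (j n - t) λ^n = 0` on an interval. By the identity
theorem for power series `j 0 = t`, which is impossible for `t ∈ (0, 1)`.
-/

open scoped Pointwise

/-- `PiFun i λ = (1-λ) ∑_{n≥0} i_n λ^n`, the series Π from the paper (0-based indexing). -/
noncomputable def PiFun (i : ℕ → ℝ) (l : ℝ) : ℝ := (1 - l) * ∑' n : ℕ, i n * l ^ n

/-- `i` is a sequence over the alphabet `{-1,0,1}`. -/
def IsCoding (i : ℕ → ℝ) : Prop := ∀ n, i n = -1 ∨ i n = 0 ∨ i n = 1

/-- Strict lexicographic order on sequences. -/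
def LexLt (i j : ℕ → ℝ) : Prop := ∃ m, (∀ n, n < m → i n = j n) ∧ i m < j m

/-- Non-strict lexicographic order on sequences. -/
def LexLe (i j : ℕ → ℝ) : Prop := LexLt i j ∨ i = j

-- `rho i j = 3^{-k}` where `k` is the first (0-based) index at which the sequences differ
-- (this equals `3^{1-k}` for 1-based indexing as in the paper).
open Classical in
noncomputable def rho (i j : ℕ → ℝ) : ℝ :=
  if i = j then 0 else (3 : ℝ) ^ (-((sInf {n : ℕ | i n ≠ j n} : ℕ) : ℤ))

/-- The middle-`(1-2λ)` Cantor set `C_λ`. -/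
def Cset (l : ℝ) : Set ℝ :=
  {x | ∃ i : ℕ → ℝ, (∀ n, i n = 0 ∨ i n = 1) ∧ x = (1 - l) * ∑' n : ℕ, i n * l ^ n}

/-- `Λ(t) = {λ ∈ (0,1/3] : t ∈ C_λ - C_λ}`. -/
def Lam (t : ℝ) : Set ℝ := {l | l ∈ Set.Ioc (0 : ℝ) (1/3) ∧ t ∈ Cset l - Cset l}

open Set

lemma IsCoding.abs_le {i : ℕ → ℝ} (hi : IsCoding i) (n : ℕ) : |i n| ≤ 1 := by
  rcases hi n with h | h | h <;> simp [h]

lemma summable_mul_pow_of_abs_le {a : ℕ → ℝ} {C x : ℝ} (ha : ∀ n, |a n| ≤ C) (hx : |x| < 1) :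
    Summable fun n ↦ a n * x ^ n := by
  refine Summable.of_norm_bounded
    ((summable_geometric_of_lt_one (abs_nonneg x) hx).mul_left C) fun n ↦ ?_
  rw [Real.norm_eq_abs, abs_mul, abs_pow]
  exact mul_le_mul_of_nonneg_right (ha n) (by positivity)

lemma abs_tsum_mul_pow_le {a : ℕ → ℝ} {C x : ℝ} (ha : ∀ n, |a n| ≤ C) (hx : |x| < 1) :
    |∑' n, a n * x ^ n| ≤ C / (1 - |x|) := by
  rw [div_eq_mul_inv, ← Real.norm_eq_abs]
  refine tsum_of_norm_bounded
    ((hasSum_geometric_of_lt_one (abs_nonneg x) hx).mul_left C) fun n ↦ ?_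
  rw [Real.norm_eq_abs, abs_mul, abs_pow]
  exact mul_le_mul_of_nonneg_right (ha n) (by positivity)

lemma hasSum_coe_mul_pow_pred {d : ℝ} (hd : |d| < 1) :
    HasSum (fun n : ℕ ↦ (n : ℝ) * d ^ (n - 1)) (1 / (1 - d) ^ 2) := by
  rw [← hasSum_nat_add_iff' 1]
  simpa [add_comm] using
    hasSum_choose_mul_geometric_of_norm_lt_one 1 (by rwa [Real.norm_eq_abs] : ‖d‖ < 1)

lemma abs_tsum_mul_pow_sub_le {a : ℕ → ℝ} {C d x y : ℝ} (ha : ∀ n, |a n| ≤ C) (hd : d < 1)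
    (hx : |x| ≤ d) (hy : |y| ≤ d) :
    |∑' n, a n * x ^ n - ∑' n, a n * y ^ n| ≤ C / (1 - d) ^ 2 * |x - y| := by
  have hd' : |d| < 1 := by rw [abs_of_nonneg ((abs_nonneg x).trans hx)]; exact hd
  rw [← Summable.tsum_sub (summable_mul_pow_of_abs_le ha (hx.trans_lt hd))
    (summable_mul_pow_of_abs_le ha (hy.trans_lt hd)), ← Real.norm_eq_abs, div_eq_mul_one_div C]
  refine tsum_of_norm_bounded (((hasSum_coe_mul_pow_pred hd').mul_left C).mul_right |x - y|)
    fun n ↦ ?_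
  rw [Real.norm_eq_abs, ← mul_sub, abs_mul]
  calc |a n| * |x ^ n - y ^ n| ≤ C * (|x - y| * n * max |x| |y| ^ (n - 1)) :=
        mul_le_mul (ha n) (abs_pow_sub_pow_le ..) (abs_nonneg _) ((abs_nonneg _).trans (ha n))
    _ ≤ C * (|x - y| * n * d ^ (n - 1)) := by
        have := (abs_nonneg _).trans (ha n)
        gcongr
        exact max_le hx hy
    _ = C * (n * d ^ (n - 1)) * |x - y| := by ring

lemma abs_piFun_sub_le {a : ℕ → ℝ} {C d x y : ℝ} (ha : ∀ n, |a n| ≤ C) (hd : d < 1)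
    (hx : x ∈ Icc 0 d) (hy : y ∈ Icc 0 d) :
    |PiFun a x - PiFun a y| ≤ C * (2 - d) / (1 - d) ^ 2 * |x - y| := by
  have hC : 0 ≤ C := (abs_nonneg _).trans (ha 0)
  have hd1 : 0 < 1 - d := by linarith
  have hxd : |x| ≤ d := by rw [abs_of_nonneg hx.1]; exact hx.2
  have hyd : |y| ≤ d := by rw [abs_of_nonneg hy.1]; exact hy.2
  set S : ℝ → ℝ := fun z ↦ ∑' n, a n * z ^ n
  have hS : |S x - S y| ≤ C / (1 - d) ^ 2 * |x - y| := abs_tsum_mul_pow_sub_le ha hd hxd hyd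
  have hSy : |S y| ≤ C / (1 - d) :=
    (abs_tsum_mul_pow_le ha (hyd.trans_lt hd)).trans (by gcongr)
  calc |PiFun a x - PiFun a y| = |(1 - x) * (S x - S y) + (y - x) * S y| := by
        simp only [PiFun, S]; ring_nf
    _ ≤ 1 * (C / (1 - d) ^ 2 * |x - y|) + |x - y| * (C / (1 - d)) := by
        refine (abs_add_le _ _).trans (add_le_add ?_ ?_) <;> rw [abs_mul]
        · exact mul_le_mul (by rw [abs_of_nonneg] <;> linarith [hx.1, hx.2]) hS
            (abs_nonneg _) zero_le_one
        · exact abs_sub_comm y x ▸ mul_le_mul_of_nonneg_left hSy (abs_nonneg _)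
    _ = C * (2 - d) / (1 - d) ^ 2 * |x - y| := by field_simp; ring

lemma pow_mul_le_abs_piFun {a : ℕ → ℝ} {k : ℕ} {l : ℝ} (hlow : ∀ n < k, a n = 0)
    (hk : 1 ≤ |a k|) (ha : ∀ n, |a n| ≤ 2) (hl0 : 0 ≤ l) (hl1 : l < 1) :
    l ^ k * (1 - 3 * l) ≤ |PiFun a l| := by
  have hl : |l| < 1 := by rwa [abs_of_nonneg hl0]
  have h1l : 0 < 1 - l := by linarith
  have hhead : ∑ n ∈ Finset.range (k + 1), a n * l ^ n = a k * l ^ k := by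
    rw [Finset.sum_range_succ, Finset.sum_eq_zero fun n hn ↦ by
      rw [hlow n (Finset.mem_range.mp hn), zero_mul], zero_add]
  set T := ∑' n, a (n + (k + 1)) * l ^ n
  have htail : ∑' n, a (n + (k + 1)) * l ^ (n + (k + 1)) = l ^ (k + 1) * T := by
    rw [← tsum_mul_left]; congr with n; ring
  have hT : |T| ≤ 2 / (1 - l) := by
    simpa [abs_of_nonneg hl0] using abs_tsum_mul_pow_le (fun n ↦ ha (n + (k + 1))) hl
  rw [PiFun, abs_mul, abs_of_pos h1l,
    ← (summable_mul_pow_of_abs_le ha hl).sum_add_tsum_nat_add (k + 1), hhead, htail]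
  calc l ^ k * (1 - 3 * l) = (1 - l) * (l ^ k - l ^ (k + 1) * (2 / (1 - l))) := by
        field_simp; ring
    _ ≤ (1 - l) * (|a k * l ^ k| - |l ^ (k + 1) * T|) := by
        rw [abs_mul, abs_mul, abs_of_nonneg (pow_nonneg hl0 k),
          abs_of_nonneg (pow_nonneg hl0 (k + 1))]
        gcongr
        exact le_mul_of_one_le_left (pow_nonneg hl0 k) hk
    _ ≤ (1 - l) * |a k * l ^ k + l ^ (k + 1) * T| := by
        gcongr
        exact abs_sub_abs_le_abs_add _ _

lemma piFun_sub {i j : ℕ → ℝ} {l : ℝ} (hi : Summable fun n ↦ i n * l ^ n)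
    (hj : Summable fun n ↦ j n * l ^ n) : PiFun i l - PiFun j l = PiFun (i - j) l := by
  rw [PiFun, PiFun, PiFun, ← mul_sub, ← hi.tsum_sub hj]
  simp only [Pi.sub_apply, sub_mul]

lemma IsCoding.pow_mul_le_abs_piFun_sub {i j : ℕ → ℝ} (hi : IsCoding i) (hj : IsCoding j)
    {k : ℕ} (hlow : ∀ n < k, i n = j n) (hk : i k ≠ j k) {l : ℝ} (hl0 : 0 ≤ l) (hl1 : l < 1) :
    l ^ k * (1 - 3 * l) ≤ |PiFun i l - PiFun j l| := by
  have hl : |l| < 1 := by rwa [abs_of_nonneg hl0]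
  rw [piFun_sub (summable_mul_pow_of_abs_le hi.abs_le hl)
    (summable_mul_pow_of_abs_le hj.abs_le hl)]
  refine pow_mul_le_abs_piFun (fun n hn ↦ sub_eq_zero.2 (hlow n hn)) ?_ (fun n ↦ ?_) hl0 hl1
  · rcases hi k with h | h | h <;> rcases hj k with h' | h' | h' <;>
      simp_all <;> norm_num
  · exact (abs_sub _ _).trans (by linarith [hi.abs_le n, hj.abs_le n])

lemma IsCoding.apply_eq_of_piFun_eq {i j : ℕ → ℝ} (hi : IsCoding i) (hj : IsCoding j)
    {t c d l l' : ℝ} (hc : 0 < c) (hd : d < 1 / 3) (hl : l ∈ Icc c d) (hl' : l' ∈ Icc c d)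
    (hil : PiFun i l = t) (hjl' : PiFun j l' = t) {m : ℕ}
    (hnear : (2 - d) / (1 - d) ^ 2 * |l - l'| < c ^ m * (1 - 3 * d)) {k : ℕ} (hk : k ≤ m) :
    i k = j k := by
  classical
  by_contra hne
  have hex : ∃ k, i k ≠ j k := ⟨k, hne⟩
  have hsep := hi.pow_mul_le_abs_piFun_sub hj (fun n hn ↦ not_not.1 (Nat.find_min hex hn))
    (Nat.find_spec hex) (hc.le.trans hl.1) (by linarith [hl.2])
  have hlip := abs_piFun_sub_le hj.abs_le (by linarith : d < 1)
    ⟨hc.le.trans hl'.1, hl'.2⟩ ⟨hc.le.trans hl.1, hl.2⟩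
  have hlow : c ^ m * (1 - 3 * d) ≤ l ^ Nat.find hex * (1 - 3 * l) := by
    refine mul_le_mul ?_ (by linarith [hl.2]) (by linarith) (pow_nonneg (hc.le.trans hl.1) _)
    calc c ^ m ≤ c ^ Nat.find hex :=
          pow_le_pow_of_le_one hc.le (by linarith [hl.1, hl.2]) ((Nat.find_min' hex hne).trans hk)
      _ ≤ l ^ Nat.find hex := pow_le_pow_left₀ hc.le hl.1 _
  have hsame : PiFun i l - PiFun j l = PiFun j l' - PiFun j l := by rw [hil, hjl']
  rw [hsame] at hsep
  rw [one_mul, abs_sub_comm l' l] at hlip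
  linarith

lemma continuousOn_apply_of_piFun_eq {I : ℝ → ℕ → ℝ} {t c d : ℝ} (hc : 0 < c) (hd : d < 1 / 3)
    (hI : ∀ l ∈ Icc c d, IsCoding (I l) ∧ PiFun (I l) l = t) (m : ℕ) :
    ContinuousOn (fun l ↦ I l m) (Icc c d) := by
  have hK : 0 < (2 - d) / (1 - d) ^ 2 := div_pos (by linarith) (pow_pos (by linarith) 2)
  have hε : 0 < c ^ m * (1 - 3 * d) := mul_pos (pow_pos hc m) (by linarith)
  refine Metric.continuousOn_iff.2 fun l' hl' ε hε₀ ↦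
    ⟨c ^ m * (1 - 3 * d) / ((2 - d) / (1 - d) ^ 2), div_pos hε hK, fun l hl hll' ↦ ?_⟩
  rw [Real.dist_eq, lt_div_iff₀ hK, mul_comm] at hll'
  rw [(hI l hl).1.apply_eq_of_piFun_eq (hI l' hl').1 hc hd hl hl' (hI l hl).2 (hI l' hl').2
    hll' le_rfl, dist_self]
  exact hε₀

lemma exists_coding_piFun_eq_on_Icc {t c d : ℝ} (hc : 0 < c) (hcd : c ≤ d) (hd : d < 1 / 3)
    (h : ∀ l ∈ Icc c d, ∃ i, IsCoding i ∧ PiFun i l = t) :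
    ∃ j, IsCoding j ∧ ∀ l ∈ Icc c d, PiFun j l = t := by
  choose! I hI using h
  have hc' : c ∈ Icc c d := left_mem_Icc.2 hcd
  refine ⟨I c, (hI c hc').1, fun l hl ↦ ?_⟩
  have hconst : I l = I c := funext fun m ↦
    isPreconnected_Icc.constant_of_mapsTo (T := {-1, 0, 1}) (toFinite _).isDiscrete
      (continuousOn_apply_of_piFun_eq hc hd hI m) (fun l hl ↦ (hI l hl).1 m) hl hc'
  rw [← hconst]
  exact (hI l hl).2

lemma eq_zero_of_tsum_mul_pow_eq_zero_on_Ioo {a : ℕ → ℝ} {C c d : ℝ} (ha : ∀ n, |a n| ≤ C)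
    (hcd : c < d) (hc : -1 ≤ c) (hd : d ≤ 1) (h : ∀ x ∈ Ioo c d, ∑' n, a n * x ^ n = 0) :
    a = 0 := by
  set p := FormalMultilinearSeries.ofScalars ℝ a
  have hsum : ∀ x, p.sum x = ∑' n, a n * x ^ n := fun x ↦ by
    exact FormalMultilinearSeries.ofScalars_sum_eq a x
  have hrad : 1 ≤ p.radius := by
    exact_mod_cast p.le_radius_of_bound C (r := 1) fun n ↦ by
      simpa [p, FormalMultilinearSeries.ofScalars_norm] using ha n
  have hball := p.hasFPowerSeriesOnBall (zero_lt_one.trans_le hrad)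
  have hmid : (c + d) / 2 ∈ Metric.eball (0 : ℝ) p.radius := by
    refine lt_of_lt_of_le ?_ hrad
    rw [edist_zero_right, ← ofReal_norm, Real.norm_eq_abs]
    exact ENNReal.ofReal_lt_one.2 (abs_lt.2 ⟨by linarith, by linarith⟩)
  have hzero : EqOn p.sum 0 (Metric.eball 0 p.radius) :=
    hball.analyticOnNhd.eqOn_zero_of_preconnected_of_eventuallyEq_zero Metric.isPreconnected_eball hmid
      (Filter.eventually_of_mem (Ioo_mem_nhds (by linarith) (by linarith)) fun x hx ↦
        (hsum x).trans (h x hx))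
  rw [← FormalMultilinearSeries.ofScalars_series_eq_zero (E := ℝ)]
  exact hball.hasFPowerSeriesAt.eq_zero_of_eventually
    (Filter.eventually_of_mem (Metric.eball_mem_nhds _ hball.r_pos) hzero)

lemma not_forall_Icc_exists_coding {t c d : ℝ} (ht0 : 0 < t) (ht1 : t < 1) (hc : 0 < c)
    (hcd : c < d) (hd : d < 1 / 3) : ¬ ∀ l ∈ Icc c d, ∃ i, IsCoding i ∧ PiFun i l = t := by
  intro h
  obtain ⟨j, hj, hjt⟩ := exists_coding_piFun_eq_on_Icc hc hcd.le hd h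
  have hcoeff : (fun n ↦ j n - t) = 0 := by
    refine eq_zero_of_tsum_mul_pow_eq_zero_on_Ioo (C := 2) (fun n ↦ ?_) hcd (by linarith)
      (by linarith) fun x hx ↦ ?_
    · exact (abs_sub _ _).trans (by linarith [hj.abs_le n, abs_of_pos ht0])
    · have hx : x ∈ Icc c d := Ioo_subset_Icc_self hx
      have hx1 : |x| < 1 := abs_lt.2 ⟨by linarith [hx.1], by linarith [hx.2]⟩
      have h1x : 1 - x ≠ 0 := by linarith [hx.2]
      calc ∑' n, (j n - t) * x ^ n = ∑' n, j n * x ^ n - t * (1 - x)⁻¹ := by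
            simp_rw [sub_mul]
            rw [(summable_mul_pow_of_abs_le hj.abs_le hx1).tsum_sub
              ((summable_geometric_of_abs_lt_one hx1).mul_left t), tsum_mul_left,
              tsum_geometric_of_abs_lt_one hx1]
        _ = 0 := by
            rw [← hjt x hx, PiFun]
            field_simp
            ring
  have hj0 : j 0 - t = 0 := congrFun hcoeff 0
  rcases hj 0 with h0 | h0 | h0 <;> rw [h0] at hj0 <;> linarith

lemma exists_coding_of_mem_Lam {t l : ℝ} (h : l ∈ Lam t) : ∃ i, IsCoding i ∧ PiFun i l = t := by
  obtain ⟨⟨hl0, hl3⟩, x, ⟨a, ha, rfl⟩, y, ⟨b, hb, rfl⟩, hxy⟩ := h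
  have hl : |l| < 1 := by rw [abs_of_pos hl0]; linarith
  have hbound : ∀ c : ℕ → ℝ, (∀ n, c n = 0 ∨ c n = 1) → ∀ n, |c n| ≤ 1 := fun c hc n ↦ by
    rcases hc n with h | h <;> simp [h]
  refine ⟨a - b, fun n ↦ ?_, ?_⟩
  · rcases ha n with h | h <;> rcases hb n with h' | h' <;> simp [h, h']
  · rw [← piFun_sub (summable_mul_pow_of_abs_le (hbound a ha) hl)
      (summable_mul_pow_of_abs_le (hbound b hb) hl)]
    exact hxy

lemma not_Ioo_subset_Lam {t a b : ℝ} (ht0 : 0 < t) (ht1 : t < 1) (hab : a < b) :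
    ¬ Ioo a b ⊆ Lam t := by
  intro h
  have hc : 0 < a + (b - a) / 4 := (h ⟨by linarith, by linarith⟩).1.1
  have hd : a + 3 * (b - a) / 4 ≤ 1 / 3 := (h ⟨by linarith, by linarith⟩).1.2
  exact not_forall_Icc_exists_coding (d := a + (b - a) / 2) ht0 ht1 hc (by linarith)
    (by linarith) fun l hl ↦ exists_coding_of_mem_Lam (h ⟨by linarith [hl.1], by linarith [hl.2]⟩)

theorem stmt14_general (t : ℝ) (ht : t ∈ Set.Ioo (0 : ℝ) 1) :
    interior (Lam t) = ∅ ∧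
    ∀ l₁ ∈ Lam t, ∀ l₂ ∈ Lam t, l₁ < l₂ → ∃ m ∈ Set.Ioo l₁ l₂, m ∉ Lam t := by
  have hIoo : ∀ a b, a < b → ¬ Ioo a b ⊆ Lam t := fun _ _ ↦ not_Ioo_subset_Lam ht.1 ht.2
  refine ⟨eq_empty_iff_forall_notMem.2 fun l hl ↦ ?_, fun l₁ _ l₂ _ h12 ↦ ?_⟩
  · obtain ⟨a, b, hab, hsub⟩ :=
      mem_nhds_iff_exists_Ioo_subset.1 (mem_interior_iff_mem_nhds.1 hl)
    exact hIoo a b (hab.1.trans hab.2) hsub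
  · by_contra! h
    exact hIoo l₁ l₂ h12 h

theorem stmt14 (t : ℝ) (ht : t ∈ Set.Ioo (0 : ℝ) 1) (ht3 : t ≠ 1/3) :
    interior (Lam t) = ∅ ∧
    ∀ l₁ ∈ Lam t, ∀ l₂ ∈ Lam t, l₁ < l₂ → ∃ m ∈ Set.Ioo l₁ l₂, m ∉ Lam t :=
  stmt14_general t ht
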